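/- arXiv:2604.14797 — 2 statements merged into one kernel-verified Lean document; each statement's English description precedes it below -/
import Mathlib

section
/- Let u : ℝ → ℝ be an analytic even function and define ũ so that u(t) = ũ(t²). Then for every ℓ ≥ 1 and t ≥ 0, ũ^{(ℓ)}(t²) = (1/((2t)^{2ℓ−1}(ℓ−1)!)) ∫₀^t (t² − s²)^{ℓ−1} u^{(2ℓ)}(s) ds (for t > 0; the singularity at t = 0 is removable). -/
open MeasureTheory Real intervalIntegral

open Set
open scoped Nat

/-!
Write `J_n[f](t) = ∫₀^t (t² - s²)^n f(s) ds`; the claim is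
`J_n[u^(2n+2)](t) = (2t)^(2n+1) n! v^(n+1)(t²)`, by induction on `n`.
Integrating by parts against the kernel gives `J_{n+1}[g'] = 2(n+1) J_n[s g]` whenever `g 0 = 0`,
which applies to `g = u^(2n+3)` because the odd derivatives of the even function `u` vanish at `0`.
Euler's relation `t (J_n[f])' = (2n+1) J_n[f] + J_n[s f']` (reflecting
`J_n[f](t) = t^(2n+1) ∫₀^1 (1 - x²)^n f(tx) dx`) follows from the same integration by parts with
`g = s f` and from `(J_{n+1}[f])' = 2(n+1) t J_n[f]`. Applied to the derivative of the induction
hypothesis, it turns `J_n[s u^(2n+3)]` into the right-hand side for `n + 1`.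
-/

noncomputable def sqKernelIntegral (n : ℕ) (f : ℝ → ℝ) (t : ℝ) : ℝ :=
  ∫ s in (0 : ℝ)..t, (t ^ 2 - s ^ 2) ^ n * f s

lemma iteratedDeriv_eq_zero_of_even_of_odd {f : ℝ → ℝ} (hf : ∀ x, f (-x) = f x) {k : ℕ}
    (hk : Odd k) : iteratedDeriv k f 0 = 0 := by
  have h := iteratedDeriv_comp_neg k f 0
  rw [funext hf, neg_zero, hk.neg_one_pow, neg_one_smul] at h
  linarith

lemma AnalyticOnNhd.hasDerivAt_iteratedDeriv {𝕜 F : Type*} [NontriviallyNormedField 𝕜]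
    [NormedAddCommGroup F] [NormedSpace 𝕜 F] [CompleteSpace F] {f : 𝕜 → F} {s : Set 𝕜}
    (hf : AnalyticOnNhd 𝕜 f s) (k : ℕ) {x : 𝕜} (hx : x ∈ s) :
    HasDerivAt (iteratedDeriv k f) (iteratedDeriv (k + 1) f x) x := by
  rw [iteratedDeriv_succ, iteratedDeriv_eq_iterate]
  exact (hf.iterated_deriv k x hx).differentiableAt.hasDerivAt

namespace sqKernelIntegral

variable {f f' g g' : ℝ → ℝ} {n : ℕ} {t : ℝ}

lemma intervalIntegrable_kernel_mul (hf : Continuous f) (n : ℕ) (t : ℝ) :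
    IntervalIntegrable (fun s ↦ (t ^ 2 - s ^ 2) ^ n * f s) volume 0 t :=
  (by fun_prop : Continuous _).intervalIntegrable _ _

lemma add (hf : Continuous f) (hg : Continuous g) :
    sqKernelIntegral n (fun s ↦ f s + g s) t =
      sqKernelIntegral n f t + sqKernelIntegral n g t := by
  simp only [sqKernelIntegral, mul_add]
  exact integral_add (intervalIntegrable_kernel_mul hf n t) (intervalIntegrable_kernel_mul hg n t)

lemma succ (hf : Continuous f) :
    sqKernelIntegral (n + 1) f t =
      t ^ 2 * sqKernelIntegral n f t - sqKernelIntegral n (fun s ↦ s ^ 2 * f s) t := by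
  simp only [sqKernelIntegral]
  rw [← intervalIntegral.integral_const_mul, ← integral_sub
    ((intervalIntegrable_kernel_mul hf n t).const_mul _)
    (intervalIntegrable_kernel_mul (by fun_prop) n t)]
  exact integral_congr fun s _ ↦ by ring

lemma zero_of_hasDerivAt (hg : ∀ x, HasDerivAt g (g' x) x) (hg' : Continuous g') :
    sqKernelIntegral 0 g' t = g t - g 0 := by
  simp only [sqKernelIntegral, pow_zero, one_mul]
  exact integral_eq_sub_of_hasDerivAt (fun x _ ↦ hg x) (hg'.intervalIntegrable _ _)

lemma hasDerivAt_zero (hf : Continuous f) : HasDerivAt (sqKernelIntegral 0 f) (f t) t := by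
  have h : sqKernelIntegral 0 f = fun τ ↦ ∫ s in (0 : ℝ)..τ, f s := by
    ext τ
    simp only [sqKernelIntegral, pow_zero, one_mul]
  rw [h]
  exact integral_hasDerivAt_right (hf.intervalIntegrable _ _) (hf.stronglyMeasurableAtFilter _ _)
    hf.continuousAt

lemma hasDerivAt_succ (hf : Continuous f) :
    HasDerivAt (sqKernelIntegral (n + 1) f) (2 * (n + 1) * t * sqKernelIntegral n f t) t := by
  induction n generalizing f with
  | zero =>
    refine ((((hasDerivAt_pow 2 t).fun_mul (hasDerivAt_zero hf)).fun_sub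
      (hasDerivAt_zero (f := fun s ↦ s ^ 2 * f s) (by fun_prop))).congr_of_eventuallyEq
      (.of_forall fun τ ↦ succ hf)).congr_deriv ?_
    simp only [sqKernelIntegral, pow_zero, one_mul]
    ring
  | succ n ih =>
    refine ((((hasDerivAt_pow 2 t).fun_mul (ih hf)).fun_sub
      (ih (f := fun s ↦ s ^ 2 * f s) (by fun_prop))).congr_of_eventuallyEq
      (.of_forall fun τ ↦ succ hf)).congr_deriv ?_
    rw [succ hf]
    push_cast
    ring

lemma succ_of_hasDerivAt (hg : ∀ x, HasDerivAt g (g' x) x) (hg' : Continuous g') (hg0 : g 0 = 0) :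
    sqKernelIntegral (n + 1) g' t = 2 * (n + 1) * sqKernelIntegral n (fun s ↦ s * g s) t := by
  have hK : ∀ x ∈ uIcc 0 t, HasDerivAt (fun s ↦ (t ^ 2 - s ^ 2) ^ (n + 1))
      ((n + 1) * (t ^ 2 - x ^ 2) ^ n * -(2 * x)) x := fun x _ ↦ by
    simpa using ((hasDerivAt_pow 2 x).const_sub (t ^ 2)).fun_pow (n + 1)
  rw [sqKernelIntegral, integral_mul_deriv_eq_deriv_mul hK (fun x _ ↦ hg x)
    ((by fun_prop : Continuous _).intervalIntegrable _ _) (hg'.intervalIntegrable _ _),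
    sqKernelIntegral, ← intervalIntegral.integral_const_mul]
  simp only [sub_self, hg0, ne_eq, add_eq_zero, one_ne_zero, and_false, not_false_eq_true,
    zero_pow, zero_mul, mul_zero, zero_sub, ← intervalIntegral.integral_neg]
  exact integral_congr fun s _ ↦ by ring

lemma euler_of_hasDerivAt (hf : ∀ x, HasDerivAt f (f' x) x) (hf' : Continuous f') {D : ℝ}
    (hD : HasDerivAt (sqKernelIntegral n f) D t) :
    t * D = (2 * n + 1) * sqKernelIntegral n f t + sqKernelIntegral n (fun s ↦ s * f' s) t := by
  have hfc : Continuous f := Differentiable.continuous fun x ↦ (hf x).differentiableAt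
  have hsf : ∀ x, HasDerivAt (fun s ↦ s * f s) (f x + x * f' x) x := fun x ↦ by
    simpa using (hasDerivAt_id' x).fun_mul (hf x)
  have hsplit := add (n := n) (t := t) hfc (by fun_prop : Continuous fun s ↦ s * f' s)
  cases n with
  | zero =>
    have hsum := zero_of_hasDerivAt (t := t) hsf (by fun_prop)
    rw [hD.unique (hasDerivAt_zero hfc)]
    simp only [zero_mul, sub_zero] at hsum
    push_cast
    linarith
  | succ m =>
    have hsum := succ_of_hasDerivAt (n := m) (t := t) hsf (by fun_prop) (by simp)
    have hrec := succ (n := m) (t := t) hfc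
    rw [hD.unique (hasDerivAt_succ hfc)]
    have hsq : (fun s ↦ s * (s * f s)) = fun s ↦ s ^ 2 * f s := funext fun s ↦ by ring
    rw [hsq] at hsum
    push_cast
    linear_combination hsplit - hsum - 2 * (m + 1) * hrec

end sqKernelIntegral

theorem sqKernelIntegral_iteratedDeriv_eq {u v : ℝ → ℝ}
    (hu : ∀ k x, HasDerivAt (iteratedDeriv k u) (iteratedDeriv (k + 1) u x) x)
    (hodd : ∀ k, Odd k → iteratedDeriv k u 0 = 0)
    (hv : ∀ k x, 0 < x → HasDerivAt (iteratedDeriv k v) (iteratedDeriv (k + 1) v x) x)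
    (huv : ∀ t, u t = v (t ^ 2)) (n : ℕ) {t : ℝ} (ht : 0 < t) :
    sqKernelIntegral n (iteratedDeriv (2 * n + 2) u) t =
      (2 * t) ^ (2 * n + 1) * n ! * iteratedDeriv (n + 1) v (t ^ 2) := by
  have hcont : ∀ k, Continuous (iteratedDeriv k u) := fun k ↦
    Differentiable.continuous fun x ↦ (hu k x).differentiableAt
  have hv_comp_sq : ∀ k {t : ℝ}, 0 < t → HasDerivAt (fun τ ↦ iteratedDeriv k v (τ ^ 2))
      (iteratedDeriv (k + 1) v (t ^ 2) * (2 * t)) t := fun k t ht ↦ by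
    exact (hv k (t ^ 2) (by positivity)).comp t
      ((hasDerivAt_pow 2 t).congr_deriv (g' := 2 * t) (by ring))
  induction n generalizing t with
  | zero =>
    have hu' : iteratedDeriv 1 u t = iteratedDeriv 1 v (t ^ 2) * (2 * t) := by
      rw [iteratedDeriv_one, funext huv]
      simpa using (hv_comp_sq 0 ht).deriv
    rw [sqKernelIntegral.zero_of_hasDerivAt (hu 1) (hcont 2), hodd 1 odd_one, hu']
    ring
  | succ n ih =>
    have hrhs : HasDerivAt (fun τ ↦ (2 * τ) ^ (2 * n + 1) * n ! * iteratedDeriv (n + 1) v (τ ^ 2))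
        ((2 * n + 1) * 2 * (2 * t) ^ (2 * n) * n ! * iteratedDeriv (n + 1) v (t ^ 2) +
          (2 * t) ^ (2 * n + 1) * n ! * (iteratedDeriv (n + 2) v (t ^ 2) * (2 * t))) t := by
      refine ((((hasDerivAt_id' t).const_mul 2).fun_pow (2 * n + 1)).mul_const _).fun_mul
        (hv_comp_sq (n + 1) ht) |>.congr_deriv ?_
      simp only [Nat.add_sub_cancel]
      push_cast
      ring
    have hEuler := sqKernelIntegral.euler_of_hasDerivAt (hu (2 * n + 2)) (hcont _)
      (hrhs.congr_of_eventuallyEq (Filter.eventually_of_mem (Ioi_mem_nhds ht) fun τ hτ ↦ ih hτ))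
    have hIBP := sqKernelIntegral.succ_of_hasDerivAt (n := n) (t := t) (hu (2 * n + 2 + 1))
      (hcont _) (hodd _ ⟨n + 1, by ring⟩)
    rw [show 2 * (n + 1) + 2 = 2 * n + 2 + 1 + 1 by ring, hIBP]
    push_cast [Nat.factorial_succ]
    linear_combination -2 * (n + 1) * hEuler - 2 * (n + 1) * (2 * n + 1) * ih ht

/-- If `u` is an even analytic function and `v` satisfies `u(t) = v(t²)` with `v` analytic
on `[0,∞)`, then for `ℓ ≥ 1` and `t > 0`,
`v^{(ℓ)}(t²) = (1/((2t)^{2ℓ−1}(ℓ−1)!)) ∫₀^t (t² − s²)^{ℓ−1} u^{(2ℓ)}(s) ds`. -/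
theorem iteratedDeriv_sq_rep (u v : ℝ → ℝ)
    (hu : ∀ x : ℝ, AnalyticAt ℝ u x)
    (heven : ∀ t : ℝ, u (-t) = u t)
    (hv : ∀ x : ℝ, 0 ≤ x → AnalyticAt ℝ v x)
    (huv : ∀ t : ℝ, u t = v (t ^ 2)) :
    ∀ ℓ : ℕ, 1 ≤ ℓ → ∀ t : ℝ, 0 < t →
      iteratedDeriv ℓ v (t ^ 2)
        = (1 / ((2 * t) ^ (2 * ℓ - 1) * ((ℓ - 1).factorial : ℝ))) *
            ∫ s in (0:ℝ)..t, (t ^ 2 - s ^ 2) ^ (ℓ - 1) * iteratedDeriv (2 * ℓ) u s := by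
  intro ℓ hℓ t ht
  obtain ⟨n, rfl⟩ : ∃ n, ℓ = n + 1 := ⟨ℓ - 1, by omega⟩
  have key := sqKernelIntegral_iteratedDeriv_eq
    (fun k x ↦ AnalyticOnNhd.hasDerivAt_iteratedDeriv (fun x _ ↦ hu x) k (mem_univ x))
    (fun k hk ↦ iteratedDeriv_eq_zero_of_even_of_odd heven hk)
    (fun k x hx ↦ AnalyticOnNhd.hasDerivAt_iteratedDeriv (s := Ioi 0) (fun x hx ↦ hv x hx.le) k hx)
    huv n ht
  rw [show 2 * (n + 1) - 1 = 2 * n + 1 by omega, Nat.add_sub_cancel,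
    show 2 * (n + 1) = 2 * n + 2 by ring]
  change _ = _ * sqKernelIntegral n _ t
  rw [key]
  field_simp
end

section
/- The function σ(t) := erf(t) + (2/√π) e^{-t²} ((11/5)t − (26/15)t³ + (4/15)t⁵) satisfies the moment conditions ∫₀^∞ (1 − σ(t)) t^{2j} dt = 0 for j = 0, 1, 2. -/
/-!
Integration by parts turns a moment of `erfc = 1 - erf` into a Gaussian moment,
`∫₀^∞ erfc(t) tⁿ dt = (2/√π)/(n+1) ∫₀^∞ t^{n+1} e^{-t²} dt`, and the odd Gaussian moments are
Gamma integrals, `∫₀^∞ t^{2m+1} e^{-t²} dt = m!/2`. Hence the `j`-th even moment of `1 - σS` is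
`(j!/(2j+1) - (11/5 j! - 26/15 (j+1)! + 4/15 (j+2)!))/√π`, and the coefficients of `σS` are the
solution of the linear system making this vanish for `j = 0, 1, 2`. The bound
`erfc t ≤ e^{-t²}` for `t ≥ 0`, from `(u + t)² ≥ u² + t²`, makes all the integrals converge and
kills the boundary term.
-/

open MeasureTheory Real

/-- The error function `erf(t) = (2/√π) ∫₀^t e^{-s²} ds`. -/
noncomputable def erf (t : ℝ) : ℝ := (2 / Real.sqrt Real.pi) * ∫ s in (0:ℝ)..t, Real.exp (-s ^ 2)

/-- Seventh-order regularizing function for the single-layer operator. -/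
noncomputable def σS (t : ℝ) : ℝ :=
  erf t + (2 / Real.sqrt Real.pi) * Real.exp (-t ^ 2) *
    ((11 / 5) * t - (26 / 15) * t ^ 3 + (4 / 15) * t ^ 5)

open Set Filter Topology Nat

lemma integrable_exp_neg_sq : Integrable fun s : ℝ => exp (-s ^ 2) := by
  simpa using integrable_exp_neg_mul_sq one_pos

lemma integral_exp_neg_sq_Ioi : ∫ s in Ioi (0:ℝ), exp (-s ^ 2) = √π / 2 := by
  simpa using integral_gaussian_Ioi 1

lemma integrableOn_pow_mul_exp_neg_sq (k : ℕ) :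
    IntegrableOn (fun t : ℝ => t ^ k * exp (-t ^ 2)) (Ioi 0) := by
  simpa using integrableOn_rpow_mul_exp_neg_mul_sq one_pos (s := k)
    (neg_one_lt_zero.trans_le k.cast_nonneg)

lemma integral_pow_mul_exp_neg_sq_odd (m : ℕ) :
    ∫ t in Ioi (0:ℝ), t ^ (2 * m + 1) * exp (-t ^ 2) = m ! / 2 := by
  have h := integral_rpow_mul_exp_neg_mul_rpow two_pos (q := 2 * m + 1)
    (neg_one_lt_zero.trans_le (by positivity)) one_pos
  rw [show ((2 * m + 1 : ℝ) + 1) / 2 = m + 1 by ring, Gamma_nat_eq_factorial, one_rpow] at h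
  convert h using 1
  · refine setIntegral_congr_fun measurableSet_Ioi fun t _ => ?_
    norm_cast
    simp
  · ring

lemma tendsto_pow_mul_exp_neg_sq (k : ℕ) :
    Tendsto (fun t : ℝ => t ^ k * exp (-t ^ 2)) atTop (𝓝 0) := by
  simpa using (rpow_mul_exp_neg_mul_sq_isLittleO_exp_neg one_pos k).tendsto_zero_of_tendsto
    (tendsto_exp_atBot.comp (tendsto_id.const_mul_atTop_of_neg (by norm_num : -(1/2 : ℝ) < 0)))

lemma hasDerivAt_erf (t : ℝ) : HasDerivAt erf (2 / √π * exp (-t ^ 2)) t := by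
  have hcont : Continuous fun s : ℝ => exp (-s ^ 2) := by fun_prop
  exact (intervalIntegral.integral_hasDerivAt_right integrable_exp_neg_sq.intervalIntegrable
    (hcont.stronglyMeasurableAtFilter _ _) hcont.continuousAt).const_mul _

@[fun_prop]
lemma continuous_erf : Continuous erf :=
  continuous_iff_continuousAt.2 fun t => (hasDerivAt_erf t).continuousAt

lemma one_sub_erf_eq_integral_Ioi (t : ℝ) : 1 - erf t = 2 / √π * ∫ s in Ioi t, exp (-s ^ 2) := by
  have hsplit := intervalIntegral.integral_interval_add_Ioi' (a := 0) (b := t)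
    integrable_exp_neg_sq.intervalIntegrable integrable_exp_neg_sq.integrableOn
  rw [integral_exp_neg_sq_Ioi] at hsplit
  have hπ : 2 / √π * (√π / 2) = 1 := by field_simp [(sqrt_pos.2 pi_pos).ne']
  rw [erf]
  linear_combination -(2 / √π) * hsplit - hπ

lemma one_sub_erf_nonneg (t : ℝ) : 0 ≤ 1 - erf t := by
  rw [one_sub_erf_eq_integral_Ioi]
  have := setIntegral_nonneg (μ := volume) measurableSet_Ioi
    fun s (_ : s ∈ Ioi t) => (exp_pos (-s ^ 2)).le
  positivity

lemma one_sub_erf_le_exp_neg_sq {t : ℝ} (ht : 0 ≤ t) : 1 - erf t ≤ exp (-t ^ 2) := by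
  have hshift : ∫ s in Ioi t, exp (-s ^ 2) = ∫ u in Ioi 0, exp (-(u + t) ^ 2) := by
    rw [← (measurePreserving_add_right volume t).setIntegral_preimage_emb
      (measurableEmbedding_addRight t), preimage_add_const_Ioi, sub_self]
  have hle : ∫ u in Ioi (0:ℝ), exp (-(u + t) ^ 2) ≤
      ∫ u in Ioi (0:ℝ), exp (-t ^ 2) * exp (-u ^ 2) := by
    refine setIntegral_mono_on ?_ ?_ measurableSet_Ioi fun u (hu : 0 < u) => ?_
    · exact (integrable_exp_neg_sq.comp_add_right t).integrableOn
    · exact integrable_exp_neg_sq.integrableOn.const_mul _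
    · rw [← exp_add]; exact exp_le_exp.2 (by nlinarith)
  rw [integral_const_mul, integral_exp_neg_sq_Ioi] at hle
  have hπ : 0 < √π := sqrt_pos.2 pi_pos
  calc 1 - erf t ≤ 2 / √π * (exp (-t ^ 2) * (√π / 2)) := by
        rw [one_sub_erf_eq_integral_Ioi, hshift]; gcongr
    _ = exp (-t ^ 2) := by field_simp

lemma integrableOn_one_sub_erf_mul_pow (n : ℕ) :
    IntegrableOn (fun t => (1 - erf t) * t ^ n) (Ioi 0) := by
  refine (integrableOn_pow_mul_exp_neg_sq n).mono'
    (by fun_prop : Continuous fun t => (1 - erf t) * t ^ n).aestronglyMeasurable.restrict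
    ((ae_restrict_iff' measurableSet_Ioi).2 (.of_forall fun t (ht : 0 < t) => ?_))
  rw [norm_mul, norm_of_nonneg (one_sub_erf_nonneg t), norm_of_nonneg (by positivity), mul_comm]
  gcongr
  exact one_sub_erf_le_exp_neg_sq ht.le

lemma tendsto_one_sub_erf_mul_pow (k : ℕ) :
    Tendsto (fun t => (1 - erf t) * t ^ k) atTop (𝓝 0) := by
  refine squeeze_zero' ?_ ?_ (tendsto_pow_mul_exp_neg_sq k)
  · filter_upwards [eventually_ge_atTop 0] with t ht
    exact mul_nonneg (one_sub_erf_nonneg t) (pow_nonneg ht k)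
  · filter_upwards [eventually_ge_atTop 0] with t ht
    rw [mul_comm]
    gcongr
    exact one_sub_erf_le_exp_neg_sq ht

lemma integral_one_sub_erf_mul_pow (n : ℕ) :
    ∫ t in Ioi 0, (1 - erf t) * t ^ n =
      2 / √π / (n + 1) * ∫ t in Ioi 0, t ^ (n + 1) * exp (-t ^ 2) := by
  have hn : (n + 1 : ℝ) ≠ 0 := by positivity
  set u : ℝ → ℝ := fun t => 1 - erf t
  set v : ℝ → ℝ := fun t => t ^ (n + 1) / (n + 1)
  have hu : ∀ t, HasDerivAt u (-(2 / √π * exp (-t ^ 2))) t :=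
    fun t => (hasDerivAt_erf t).const_sub 1
  have hv : ∀ t, HasDerivAt v (t ^ n) t := fun t => by
    simpa [hn] using (hasDerivAt_pow (n + 1) t).div_const (n + 1 : ℝ)
  have hu'v : ∀ t, -(2 / √π * exp (-t ^ 2)) * v t =
      -(2 / √π / (n + 1)) * (t ^ (n + 1) * exp (-t ^ 2)) := fun t => by ring
  have huv_cont : Continuous (u * v) := by
    show Continuous fun t => (1 - erf t) * (t ^ (n + 1) / (n + 1)); fun_prop
  have hibp := integral_Ioi_mul_deriv_eq_deriv_mul (a := 0) (a' := 0) (b' := 0)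
    (fun t _ => hu t) (fun t _ => hv t) (integrableOn_one_sub_erf_mul_pow n)
    (IntegrableOn.congr_fun ((integrableOn_pow_mul_exp_neg_sq (n + 1)).const_mul _)
      (fun t _ => (hu'v t).symm) measurableSet_Ioi)
    ((huv_cont.tendsto' 0 0 (by simp [u, v])).mono_left nhdsWithin_le_nhds)
    (by simpa [Pi.mul_def, u, v, mul_div_assoc] using
      (tendsto_one_sub_erf_mul_pow (n + 1)).div_const (n + 1 : ℝ))
  rw [hibp, zero_sub_zero, integral_congr_ae (.of_forall hu'v), integral_const_mul]
  ring

lemma integral_one_sub_σS_mul_pow_even (j : ℕ) :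
    ∫ t in Ioi 0, (1 - σS t) * t ^ (2 * j) =
      ((j ! : ℝ) / (2 * j + 1) - (11 / 5 * (j ! : ℝ) - 26 / 15 * (j + 1)! + 4 / 15 * (j + 2)!))
        / √π := by
  have hM : ∀ k, Integrable (fun t : ℝ => t ^ k * exp (-t ^ 2)) (volume.restrict (Ioi 0)) :=
    integrableOn_pow_mul_exp_neg_sq
  have hsplit : ∀ t, (1 - σS t) * t ^ (2 * j) = (1 - erf t) * t ^ (2 * j) - 2 / √π *
      (11 / 5 * (t ^ (2 * j + 1) * exp (-t ^ 2)) - 26 / 15 * (t ^ (2 * (j + 1) + 1) * exp (-t ^ 2))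
        + 4 / 15 * (t ^ (2 * (j + 2) + 1) * exp (-t ^ 2))) := fun t => by
    rw [σS]; ring
  rw [integral_congr_ae (.of_forall hsplit), integral_sub, integral_const_mul, integral_add,
    integral_sub, integral_const_mul, integral_const_mul, integral_const_mul,
    integral_one_sub_erf_mul_pow, integral_pow_mul_exp_neg_sq_odd, integral_pow_mul_exp_neg_sq_odd,
    integral_pow_mul_exp_neg_sq_odd]
  · have hπ : √π ≠ 0 := (sqrt_pos.2 pi_pos).ne'
    push_cast
    field_simp
  all_goals first | exact integrableOn_one_sub_erf_mul_pow _ | fun_prop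

/-- The moment conditions `∫₀^∞ (1 − σ(t)) t^{2j} dt = 0` for `j = 0, 1, 2`. -/
theorem sigmaS_moments :
    ∀ j : ℕ, j ≤ 2 → ∫ t in Set.Ioi (0:ℝ), (1 - σS t) * t ^ (2 * j) = 0 := by
  intro j hj
  rw [integral_one_sub_σS_mul_pow_even]
  interval_cases j <;> norm_num [factorial]
end
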